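/- Let r > 0, v > 0 and let 0 ≤ f₁ < f₂ be real numbers with Δ > (1+r)·√(1+f₂). Define 𝓐(f) = v·((Δ − √(1+f)·(1+r))·(Δ² + Δ·√(1+f)·(1+r) + (1+f)·(r−2)·(r+1)) + (1+f)^{3/2}·r²·(r+1))/(3Δ). Then 𝓐(f₂) < 𝓐(f₁); that is, the adverse selection cost strictly decreases in the pool fee. -/
import Mathlib

lemma rpow_three_halves_eq (x : ℝ) (hx : 0 ≤ x) :
    x ^ ((3 : ℝ) / 2) = Real.sqrt x ^ 3 := by
  rw [Real.sqrt_eq_rpow, ← Real.rpow_natCast (x ^ ((1:ℝ)/2)) 3,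
    ← Real.rpow_mul hx]
  norm_num

/-- Lemma 2 (adverse selection decreases in the fee): for `r > 0`, `v > 0`,
`0 ≤ f₁ < f₂` and `Δ > (1+r)·√(1+f₂)`, the adverse selection cost satisfies
`𝓐(f₂) < 𝓐(f₁)`. -/
theorem adverse_selection_strict_anti
    (r v Δ f₁ f₂ : ℝ) (hr : 0 < r) (hv : 0 < v)
    (hf₁ : 0 ≤ f₁) (hf₁₂ : f₁ < f₂) (hΔ : (1 + r) * Real.sqrt (1 + f₂) < Δ) :
    (fun f : ℝ =>
        v * ((Δ - Real.sqrt (1 + f) * (1 + r)) *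
              (Δ ^ 2 + Δ * Real.sqrt (1 + f) * (1 + r) + (1 + f) * (r - 2) * (r + 1)) +
            (1 + f) ^ ((3 : ℝ) / 2) * r ^ 2 * (r + 1)) / (3 * Δ)) f₂ <
    (fun f : ℝ =>
        v * ((Δ - Real.sqrt (1 + f) * (1 + r)) *
              (Δ ^ 2 + Δ * Real.sqrt (1 + f) * (1 + r) + (1 + f) * (r - 2) * (r + 1)) +
            (1 + f) ^ ((3 : ℝ) / 2) * r ^ 2 * (r + 1)) / (3 * Δ)) f₁ := by
  simp only
  set s₁ := Real.sqrt (1 + f₁) with hs₁def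
  set s₂ := Real.sqrt (1 + f₂) with hs₂def
  have h1f₁ : (0:ℝ) ≤ 1 + f₁ := by linarith
  have h1f₂ : (0:ℝ) ≤ 1 + f₂ := by linarith
  have hs₁sq : s₁ ^ 2 = 1 + f₁ := Real.sq_sqrt h1f₁
  have hs₂sq : s₂ ^ 2 = 1 + f₂ := Real.sq_sqrt h1f₂
  have hs₁1 : 1 ≤ s₁ := by
    rw [show (1:ℝ) = Real.sqrt 1 by simp [Real.sqrt_one]]
    exact Real.sqrt_le_sqrt (by linarith)
  have hs₁₂ : s₁ < s₂ := Real.sqrt_lt_sqrt h1f₁ (by linarith)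
  have hΔpos : 0 < Δ := by nlinarith
  rw [rpow_three_halves_eq _ h1f₁, rpow_three_halves_eq _ h1f₂, ← hs₁def, ← hs₂def]
  rw [div_lt_div_iff_of_pos_right (by linarith : (0:ℝ) < 3 * Δ)]
  have key : 3 * Δ * (s₁ + s₂) - (r + 2) * (s₂^2 + s₁*s₂ + s₁^2) > 0 := by
    have hs₁pos : (0:ℝ) < s₁ := by linarith
    have hs₂pos : (0:ℝ) < s₂ := by linarith
    nlinarith [mul_lt_mul_of_pos_right hΔ (show (0:ℝ) < s₁ + s₂ by linarith),
      mul_lt_mul_of_pos_left hs₁₂ hs₁pos, mul_lt_mul_of_pos_right hs₁₂ hs₂pos,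
      mul_pos hr (mul_pos hs₁pos hs₁pos), mul_pos hr (mul_pos hs₁pos hs₂pos),
      mul_pos hr (mul_pos hs₂pos hs₂pos)]
  have hE : (Δ - s₂ * (1 + r)) * (Δ ^ 2 + Δ * s₂ * (1 + r) + (1 + f₂) * (r - 2) * (r + 1)) +
        s₂ ^ 3 * r ^ 2 * (r + 1) <
      (Δ - s₁ * (1 + r)) * (Δ ^ 2 + Δ * s₁ * (1 + r) + (1 + f₁) * (r - 2) * (r + 1)) +
        s₁ ^ 3 * r ^ 2 * (r + 1) := by
    rw [← hs₁sq, ← hs₂sq]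
    nlinarith [mul_pos (mul_pos (show (0:ℝ) < r + 1 by linarith)
      (show (0:ℝ) < s₂ - s₁ by linarith)) key]
  exact mul_lt_mul_of_pos_left hE hv
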